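/- Let (V, l_∗, r_∗, l_∘, r_∘) be a representation of an anti-pre-Poisson algebra (A, ∗, ∘). Then (V, -l_∗, -l_∘) is a representation of the sub-adjacent Poisson algebra (A, ⋆, [,]), where x⋆y = x∗y+y∗x and [x,y] = x∘y-y∘x. -/

import Mathlib

/-- A representation `(V, l, r)` of an anti-Zinbiel algebra `(A, ∗)` (multiplication in
`Module.End` is composition; `l⋆ = l + r`). -/
def IsAZRep {k A V : Type*} [Field k] [AddCommGroup A] [Module k A]
    [AddCommGroup V] [Module k V]
    (s : A →ₗ[k] A →ₗ[k] A) (l r : A → Module.End k V) : Prop :=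
  IsLinearMap k l ∧ IsLinearMap k r ∧
  (∀ x y, l x * l y = - l (s x y + s y x)) ∧
  (∀ x y, l x * l y = - (r x * (l y + r y))) ∧
  (∀ x y, l x * l y = r (s y x)) ∧
  (∀ x y, l x * r y = - (r y * (l x + r x))) ∧
  (∀ x y, l x * r y = - (r x * (l y + r y))) ∧
  (∀ x y, l x * r y = l y * r x) ∧
  (∀ x y, r (s x y) = l x * r y) ∧
  (∀ x y, l y * l x = l x * l y)

/-- A representation `(V, l, r)` of an anti-pre-Lie algebra `(A, ∘)`. -/
def IsAPLRep {k A V : Type*} [Field k] [AddCommGroup A] [Module k A]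
    [AddCommGroup V] [Module k V]
    (c : A →ₗ[k] A →ₗ[k] A) (l r : A → Module.End k V) : Prop :=
  IsLinearMap k l ∧ IsLinearMap k r ∧
  (∀ x y, l (c y x) - l (c x y) = l x * l y - l y * l x) ∧
  (∀ x y, r (c x y) = l x * r y + r y * l x - r y * r x) ∧
  (∀ x y, l (c y x) - l (c x y) = r x * l y - r y * l x - r x * r y + r y * r x)

/-- A representation `(V, ls, rs, lc, rc)` of an anti-pre-Poisson algebra `(A, ∗, ∘)`. -/
def IsAPPRep {k A V : Type*} [Field k] [AddCommGroup A] [Module k A]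
    [AddCommGroup V] [Module k V]
    (s c : A →ₗ[k] A →ₗ[k] A) (ls rs lc rc : A → Module.End k V) : Prop :=
  IsAZRep s ls rs ∧ IsAPLRep c lc rc ∧
  (∀ x y, ls (c x y - c y x) = ls y * lc x - lc x * ls y) ∧
  (∀ x y, lc (s x y + s y x) = - (ls x * lc y) - ls y * lc x) ∧
  (∀ x y, rs x * (lc y - rc y) = rc (s y x) - ls y * rc x) ∧
  (∀ x y, rc x * (ls y + rs y) = - rs (c y x) - ls y * rc x) ∧
  (∀ x y, rs x * (lc y - rc y) = rs (c y x) - lc y * rs x) ∧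
  (∀ x y, rc (s x y + s y x) + ls x * lc y + ls y * lc x = ls x * rc y + ls y * rc x) ∧
  (∀ x y, lc x * (ls y + rs y) + rs (c y x) + ls y * rc x = ls y * lc x + rs (c x y))

/-- A representation `(V, μ, ρ)` of the Poisson algebra with product `x⋆y = x∗y+y∗x`
and bracket `[x,y] = x∘y-y∘x` coming from an anti-pre-Poisson algebra `(A,s,c)`. -/
def IsPoissonRep {k A V : Type*} [Field k] [AddCommGroup A] [Module k A]
    [AddCommGroup V] [Module k V]
    (s c : A →ₗ[k] A →ₗ[k] A) (μ ρ : A → Module.End k V) : Prop :=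
  IsLinearMap k μ ∧ IsLinearMap k ρ ∧
  (∀ x y, μ (s x y + s y x) = μ x * μ y) ∧
  (∀ x y, ρ (c x y - c y x) = ρ x * ρ y - ρ y * ρ x) ∧
  (∀ x y, ρ (s x y + s y x) = μ y * ρ x + μ x * ρ y) ∧
  (∀ x y, μ (c x y - c y x) = ρ x * μ y - μ y * ρ x)

theorem IsLinearMap.neg {R M N : Type*} [Semiring R] [AddCommMonoid M]
    [AddCommGroup N] [Module R M] [Module R N] {f : M → N} (hf : IsLinearMap R f) :
    IsLinearMap R fun x => -f x :=
  (-hf.mk' f).isLinear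

section

variable {k A V : Type*} [Field k] [AddCommGroup A] [Module k A]
    [AddCommGroup V] [Module k V] {s c : A →ₗ[k] A →ₗ[k] A} {l r : A → Module.End k V}

theorem IsAZRep.neg_map_symm_mul (h : IsAZRep s l r) (x y : A) :
    -l (s x y + s y x) = -l x * -l y := by
  obtain ⟨-, -, hmul, -⟩ := h
  rw [neg_mul_neg, hmul]

theorem IsAPLRep.neg_map_commutator (h : IsAPLRep c l r) (x y : A) :
    -l (c x y - c y x) = -l x * -l y - -l y * -l x := by
  obtain ⟨hl, -, hcomm, -⟩ := h
  rw [neg_mul_neg, neg_mul_neg, hl.map_sub, neg_sub, hcomm]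

variable {ls rs lc rc : A → Module.End k V}

theorem IsAPPRep.neg_lc_map_symm_mul (h : IsAPPRep s c ls rs lc rc) (x y : A) :
    -lc (s x y + s y x) = -ls y * -lc x + -ls x * -lc y := by
  obtain ⟨-, -, -, hlc, -⟩ := h
  rw [neg_mul_neg, neg_mul_neg, hlc]
  abel

theorem IsAPPRep.neg_ls_map_commutator (h : IsAPPRep s c ls rs lc rc) (x y : A) :
    -ls (c x y - c y x) = -lc x * -ls y - -ls y * -lc x := by
  obtain ⟨-, -, hls, -⟩ := h
  rw [neg_mul_neg, neg_mul_neg, hls, neg_sub]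

end

/-- if `(V, ls, rs, lc, rc)` is a representation of an anti-pre-Poisson
algebra, then `(V, -ls, -lc)` is a representation of the sub-adjacent Poisson algebra. -/
theorem appRep_to_poissonRep {k A V : Type*} [Field k] [AddCommGroup A] [Module k A]
    [AddCommGroup V] [Module k V]
    (s c : A →ₗ[k] A →ₗ[k] A) (ls rs lc rc : A → Module.End k V)
    (h : IsAPPRep s c ls rs lc rc) :
    IsPoissonRep s c (fun x => -(ls x)) (fun x => -(lc x)) :=
  ⟨h.1.1.neg, h.2.1.1.neg, h.1.neg_map_symm_mul, h.2.1.neg_map_commutator,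
    h.neg_lc_map_symm_mul, h.neg_ls_map_commutator⟩
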